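/- Let m and k be positive integers, let P ⊆ ℤᵐ be a polyhedral set, and suppose there exist polyhedral sets X₁, …, X_k ⊆ ℤᵐ such that P ⊆ X₁ ∪ ⋯ ∪ X_k. Then there exist polyhedral sets Y₁, …, Y_k with Yᵢ ⊆ Xᵢ for each i, with Yᵢ ∩ Y_j = ∅ whenever i ≠ j, and with P = Y₁ ∪ ⋯ ∪ Y_k. -/

import Mathlib

/-- An elementary subset of `ℤᵐ`: a hyperplane, an open affine half-space, or a
congruence set, defined by the standard scalar product. -/
def IsElementarySet {m : ℕ} (E : Set (Fin m → ℤ)) : Prop :=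
  (∃ (u : Fin m → ℤ) (a : ℤ), E = {z | (∑ i, u i * z i) = a}) ∨
  (∃ (u : Fin m → ℤ) (a : ℤ), E = {z | (∑ i, u i * z i) > a}) ∨
  (∃ (u : Fin m → ℤ) (a : ℤ) (b : ℤ), 0 < b ∧ E = {z | (∑ i, u i * z i) ≡ a [ZMOD b]})

/-- A basic polyhedral set: a finite intersection of elementary sets. -/
def IsBasicPolyhedralSet {m : ℕ} (B : Set (Fin m → ℤ)) : Prop :=
  ∃ (k : ℕ) (E : Fin k → Set (Fin m → ℤ)),
    (∀ i, IsElementarySet (E i)) ∧ B = ⋂ i, E i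

/-- A polyhedral set: a finite union of basic polyhedral sets. -/
def IsPolyhedralSet {m : ℕ} (P : Set (Fin m → ℤ)) : Prop :=
  ∃ (k : ℕ) (B : Fin k → Set (Fin m → ℤ)),
    (∀ i, IsBasicPolyhedralSet (B i)) ∧ P = ⋃ i, B i

/-!
Polyhedral sets form a Boolean algebra of subsets of `ℤᵐ`: they are closed under finite unions
and intersections by definition and distributivity, and the complement of an elementary set is
a finite union of elementary sets. The pieces are then `Yᵢ = (P ∩ Xᵢ) \ ⋃_{j < i} (P ∩ Xⱼ)`.
-/

open Set

variable {m : ℕ}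

section Elementary

variable (u : Fin m → ℤ) (a : ℤ)

theorem isElementarySet_gt : IsElementarySet {z : Fin m → ℤ | ∑ i, u i * z i > a} :=
  Or.inr <| Or.inl ⟨u, a, rfl⟩

theorem isElementarySet_modEq {b : ℤ} (hb : 0 < b) :
    IsElementarySet {z : Fin m → ℤ | ∑ i, u i * z i ≡ a [ZMOD b]} :=
  Or.inr <| Or.inr ⟨u, a, b, hb, rfl⟩

theorem compl_setOf_sum_eq : {z : Fin m → ℤ | ∑ i, u i * z i = a}ᶜ =
    {z | ∑ i, u i * z i > a} ∪ {z | ∑ i, (-u) i * z i > -a} := by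
  ext z
  simp only [mem_compl_iff, mem_ofPred_eq, mem_union, Pi.neg_apply, neg_mul,
    Finset.sum_neg_distrib]
  omega

theorem compl_setOf_sum_gt : {z : Fin m → ℤ | ∑ i, u i * z i > a}ᶜ =
    {z | ∑ i, (-u) i * z i > -a - 1} := by
  ext z
  simp only [mem_compl_iff, mem_ofPred_eq, Pi.neg_apply, neg_mul, Finset.sum_neg_distrib]
  omega

theorem compl_setOf_sum_modEq {b : ℤ} (hb : 0 < b) :
    {z : Fin m → ℤ | ∑ i, u i * z i ≡ a [ZMOD b]}ᶜ =
      ⋃ c : Finset.Ioo 0 b, {z | ∑ i, u i * z i ≡ a + c [ZMOD b]} := by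
  ext z
  simp only [mem_compl_iff, mem_ofPred_eq, mem_iUnion, Subtype.exists, Finset.mem_Ioo,
    exists_prop]
  set s := ∑ i, u i * z i
  constructor
  · intro hs
    refine ⟨(s - a) % b, ⟨?_, Int.emod_lt_of_pos _ hb⟩, ?_⟩
    · refine lt_of_le_of_ne (Int.emod_nonneg _ hb.ne') fun h => hs ?_
      exact (Int.modEq_iff_dvd.2 (Int.dvd_of_emod_eq_zero h.symm)).symm
    · simpa using ((Int.mod_modEq (s - a) b).add_left a).symm
  · rintro ⟨c, ⟨hc0, hcb⟩, hc⟩ hs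
    have hc_zero : 0 ≡ c [ZMOD b] := Int.ModEq.add_left_cancel' a (by simpa using hs.symm.trans hc)
    exact not_le.mpr hcb (Int.le_of_dvd hc0 (Int.modEq_zero_iff_dvd.1 hc_zero.symm))

end Elementary

theorem IsElementarySet.isBasicPolyhedralSet {E : Set (Fin m → ℤ)} (h : IsElementarySet E) :
    IsBasicPolyhedralSet E :=
  ⟨1, fun _ => E, fun _ => h, (iInter_const E).symm⟩

theorem isBasicPolyhedralSet_iInter {ι : Type*} [Finite ι] {E : ι → Set (Fin m → ℤ)}
    (h : ∀ i, IsElementarySet (E i)) : IsBasicPolyhedralSet (⋂ i, E i) :=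
  let e := Finite.equivFin ι
  ⟨Nat.card ι, fun j => E (e.symm j), fun _ => h _, (e.symm.surjective.iInter_comp E).symm⟩

theorem IsBasicPolyhedralSet.inter {B C : Set (Fin m → ℤ)} (hB : IsBasicPolyhedralSet B)
    (hC : IsBasicPolyhedralSet C) : IsBasicPolyhedralSet (B ∩ C) := by
  obtain ⟨_, E, hE, rfl⟩ := hB
  obtain ⟨_, F, hF, rfl⟩ := hC
  have h := isBasicPolyhedralSet_iInter (E := Sum.elim E F) (Sum.forall.2 ⟨hE, hF⟩)
  rwa [iInter_sum] at h

theorem IsBasicPolyhedralSet.isPolyhedralSet {B : Set (Fin m → ℤ)}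
    (h : IsBasicPolyhedralSet B) : IsPolyhedralSet B :=
  ⟨1, fun _ => B, fun _ => h, (iUnion_const B).symm⟩

theorem IsElementarySet.isPolyhedralSet {E : Set (Fin m → ℤ)} (h : IsElementarySet E) :
    IsPolyhedralSet E :=
  h.isBasicPolyhedralSet.isPolyhedralSet

theorem isPolyhedralSet_univ : IsPolyhedralSet (univ : Set (Fin m → ℤ)) :=
  IsBasicPolyhedralSet.isPolyhedralSet ⟨0, Fin.elim0, fun i => i.elim0, (iInter_of_empty _).symm⟩

theorem isPolyhedralSet_iUnion {ι : Type*} [Finite ι] {P : ι → Set (Fin m → ℤ)}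
    (h : ∀ i, IsPolyhedralSet (P i)) : IsPolyhedralSet (⋃ i, P i) := by
  choose n B hB hP using h
  let e := Finite.equivFin (Σ i, Fin (n i))
  refine ⟨Nat.card (Σ i, Fin (n i)), fun j => B (e.symm j).1 (e.symm j).2, fun _ => hB _ _, ?_⟩
  rw [e.symm.surjective.iUnion_comp (fun p => B p.1 p.2), iUnion_sigma]
  exact iUnion_congr hP

theorem IsPolyhedralSet.union {P Q : Set (Fin m → ℤ)} (hP : IsPolyhedralSet P)
    (hQ : IsPolyhedralSet Q) : IsPolyhedralSet (P ∪ Q) := by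
  rw [union_eq_iUnion]
  exact isPolyhedralSet_iUnion (Bool.forall_bool.2 ⟨hQ, hP⟩)

theorem IsPolyhedralSet.inter {P Q : Set (Fin m → ℤ)} (hP : IsPolyhedralSet P)
    (hQ : IsPolyhedralSet Q) : IsPolyhedralSet (P ∩ Q) := by
  obtain ⟨_, B, hB, rfl⟩ := hP
  obtain ⟨_, C, hC, rfl⟩ := hQ
  rw [iUnion_inter_iUnion]
  exact isPolyhedralSet_iUnion fun i => isPolyhedralSet_iUnion fun j =>
    ((hB i).inter (hC j)).isPolyhedralSet

theorem isPolyhedralSet_iInter {ι : Type*} [Finite ι] {P : ι → Set (Fin m → ℤ)}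
    (h : ∀ i, IsPolyhedralSet (P i)) : IsPolyhedralSet (⋂ i, P i) := by
  induction ι using Finite.induction_empty_option with
  | of_equiv e ih => exact e.surjective.iInter_comp P ▸ ih fun i => h (e i)
  | h_empty => simpa using isPolyhedralSet_univ
  | h_option ih => exact iInter_option P ▸ (h none).inter (ih fun i => h (some i))

theorem IsElementarySet.isPolyhedralSet_compl {E : Set (Fin m → ℤ)} (h : IsElementarySet E) :
    IsPolyhedralSet Eᶜ := by
  rcases h with ⟨u, a, rfl⟩ | ⟨u, a, rfl⟩ | ⟨u, a, b, hb, rfl⟩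
  · rw [compl_setOf_sum_eq]
    exact (isElementarySet_gt _ _).isPolyhedralSet.union (isElementarySet_gt _ _).isPolyhedralSet
  · rw [compl_setOf_sum_gt]
    exact (isElementarySet_gt _ _).isPolyhedralSet
  · rw [compl_setOf_sum_modEq _ _ hb]
    exact isPolyhedralSet_iUnion fun _ => (isElementarySet_modEq _ _ hb).isPolyhedralSet

theorem IsPolyhedralSet.compl {P : Set (Fin m → ℤ)} (h : IsPolyhedralSet P) :
    IsPolyhedralSet Pᶜ := by
  obtain ⟨_, B, hB, rfl⟩ := h
  rw [compl_iUnion]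
  refine isPolyhedralSet_iInter fun i => ?_
  obtain ⟨_, E, hE, hBE⟩ := hB i
  rw [hBE, compl_iInter]
  exact isPolyhedralSet_iUnion fun j => (hE j).isPolyhedralSet_compl

theorem IsPolyhedralSet.diff {P Q : Set (Fin m → ℤ)} (hP : IsPolyhedralSet P)
    (hQ : IsPolyhedralSet Q) : IsPolyhedralSet (P \ Q) :=
  hP.inter hQ.compl

theorem polyhedral_cover_disjointify_general {m k : ℕ}
    (P : Set (Fin m → ℤ)) (hP : IsPolyhedralSet P)
    (X : Fin k → Set (Fin m → ℤ)) (hX : ∀ i, IsPolyhedralSet (X i))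
    (hcover : P ⊆ ⋃ i, X i) :
    ∃ Y : Fin k → Set (Fin m → ℤ),
      (∀ i, IsPolyhedralSet (Y i)) ∧ (∀ i, Y i ⊆ X i) ∧
      (∀ i j, i ≠ j → Y i ∩ Y j = ∅) ∧ P = ⋃ i, Y i := by
  refine ⟨disjointed fun i => P ∩ X i, fun i => ?_, fun i => ?_, fun i j hij => ?_, ?_⟩
  · exact disjointedRec (fun _ j ht => ht.diff (hP.inter (hX j))) (hP.inter (hX i))
  · exact (disjointed_subset _ i).trans inter_subset_right
  · exact disjoint_iff_inter_eq_empty.mp (disjoint_disjointed _ hij)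
  · rw [iUnion_disjointed, ← inter_iUnion, inter_eq_left.mpr hcover]

/-- A polyhedral set covered by finitely many polyhedral sets can be partitioned into
pairwise disjoint polyhedral pieces, each contained in one of the covering sets. -/
theorem polyhedral_cover_disjointify {m k : ℕ} (hm : 0 < m) (hk : 0 < k)
    (P : Set (Fin m → ℤ)) (hP : IsPolyhedralSet P)
    (X : Fin k → Set (Fin m → ℤ)) (hX : ∀ i, IsPolyhedralSet (X i))
    (hcover : P ⊆ ⋃ i, X i) :
    ∃ Y : Fin k → Set (Fin m → ℤ),
      (∀ i, IsPolyhedralSet (Y i)) ∧ (∀ i, Y i ⊆ X i) ∧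
      (∀ i j, i ≠ j → Y i ∩ Y j = ∅) ∧ P = ⋃ i, Y i :=
  polyhedral_cover_disjointify_general P hP X hX hcover
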